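/- Assume either (0 < β < 1 and −min(1/2, β) < δ ≤ 0) or (β = δ = 0). Let (μ_t)_{t>0} be an ATS mixing family and σ̂ an ATM implied volatility for (μ_t). Then σ̂_t → 0 as t → 0⁺. -/

import Mathlib

open MeasureTheory Real Filter Set Topology Asymptotics

/-- The ATS Laplace transform `L_t(u)` with parameters `α ∈ (0,1)`, `k̄ > 0`, `β ∈ ℝ`,
where `k_t = k̄·t^β`. -/
noncomputable def ATSLaplace (α kbar β : ℝ) (t u : ℝ) : ℝ :=
  Real.exp ((t / (kbar * t ^ β)) * ((1 - α) / α) *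
    (1 - (1 + u * (kbar * t ^ β) / ((1 - α) * t)) ^ α))

/-- Standard normal cumulative distribution function. -/
noncomputable def stdN (z : ℝ) : ℝ :=
  (Real.sqrt (2 * Real.pi))⁻¹ * ∫ x in Set.Iic z, Real.exp (-x ^ 2 / 2)

/-- Standard normal probability density function. -/
noncomputable def stdNd (z : ℝ) : ℝ :=
  (Real.sqrt (2 * Real.pi))⁻¹ * Real.exp (-z ^ 2 / 2)

/-- The drift `φ_t`, defined by `φ_t·t = −ln L_t(t·σ̄²·η_t)` with `η_t = η̄·t^δ`. -/
noncomputable def ATSphi (α kbar σbar ηbar β δ : ℝ) (t : ℝ) : ℝ :=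
  -Real.log (ATSLaplace α kbar β t (t * σbar ^ 2 * (ηbar * t ^ δ))) / t

/-- The quantity `l_t^z = −σ̄·η_t·√(z·t) + φ_t·√t/(σ̄·√z)`. -/
noncomputable def ATSl (α kbar σbar ηbar β δ : ℝ) (t z : ℝ) : ℝ :=
  -(σbar * (ηbar * t ^ δ)) * Real.sqrt (z * t) +
    ATSphi α kbar σbar ηbar β δ t * Real.sqrt t / (σbar * Real.sqrt z)

/-- The ATM ATS call price `C_t`. -/
noncomputable def ATSCall (α kbar σbar ηbar β δ : ℝ) (μ : Measure ℝ) (t : ℝ) : ℝ :=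
  ∫ z, (Real.exp (ATSphi α kbar σbar ηbar β δ t * t - t * σbar ^ 2 * (ηbar * t ^ δ) * z) *
      stdN (ATSl α kbar σbar ηbar β δ t z + σbar * Real.sqrt (z * t) / 2) -
      stdN (ATSl α kbar σbar ηbar β δ t z - σbar * Real.sqrt (z * t) / 2)) ∂μ

/-- The skew term `ξ̂_t`. -/
noncomputable def ATSSkew (α kbar σbar ηbar β δ : ℝ) (μ : Measure ℝ) (σhat : ℝ → ℝ)
    (t : ℝ) : ℝ :=
  (stdN (-(σhat t * Real.sqrt t / 2)) -
      ∫ z, stdN (ATSl α kbar σbar ηbar β δ t z - σbar * Real.sqrt (z * t) / 2) ∂μ) /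
    stdNd (-(σhat t * Real.sqrt t / 2))

/-!
The integrand of the ATM ATS call price is a Black–Scholes call price whose log-forward is at most
the drift `φ_t t`, and such a price grows at most like `exp` in the log-forward; hence
`C_t ≤ E[min(σ̄ √(t Z) / 2, 1)] + (exp (φ_t t) - 1)` for `Z ~ μ_t`, and the drift term is
`O(t ^ (1 + δ)) = o(√t)`. For the first term split at a level `c`: below `c`, `√Z ≤ √c`; above it,
`√Z` is controlled by `P(Z > c)` and by the truncated mean `E[min(k² Z, 1)] / k²`. Since
`min(y, 1) ≤ 2 (1 - exp (-y))`, both are read off the Laplace transform: the tail is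
`≲ 1 - L_t(1/c) = O(t ^ ((1-β)(1-α)))` and the truncated mean is `≲ (1 - L_t(k²)) / k² ≤ 1`.
So `C_t = o(√t)`, while `N(a) - N(-a) ≥ a / 3` for `a ≤ 1` forces `σ̂_t → 0`.
-/

lemma integrable_exp_neg_sq_div_two : Integrable fun x : ℝ => exp (-x ^ 2 / 2) := by
  simpa [neg_div, div_eq_inv_mul] using integrable_exp_neg_mul_sq (b := 1 / 2) (by norm_num)

lemma integral_exp_neg_sq_div_two : ∫ x : ℝ, exp (-x ^ 2 / 2) = √(2 * π) := by
  have h := integral_gaussian (1 / 2)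
  simpa [neg_div, div_eq_inv_mul, mul_comm π 2] using h

lemma two_le_sqrt_two_mul_pi : 2 ≤ √(2 * π) :=
  le_sqrt_of_sq_le (by nlinarith [pi_gt_three])

lemma sqrt_two_mul_pi_le_three : √(2 * π) ≤ 3 :=
  sqrt_le_iff.2 ⟨by norm_num, by nlinarith [pi_lt_d2]⟩

lemma stdN_nonneg (z : ℝ) : 0 ≤ stdN z :=
  mul_nonneg (by positivity) (setIntegral_nonneg measurableSet_Iic fun x _ => (exp_pos _).le)

lemma stdN_le_one (z : ℝ) : stdN z ≤ 1 := by
  have h : ∫ x in Iic z, exp (-x ^ 2 / 2) ≤ √(2 * π) :=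
    integral_exp_neg_sq_div_two ▸ setIntegral_le_integral integrable_exp_neg_sq_div_two
      (.of_forall fun x => (exp_pos _).le)
  calc stdN z ≤ (√(2 * π))⁻¹ * √(2 * π) := by unfold stdN; gcongr
    _ = 1 := inv_mul_cancel₀ (by positivity)

lemma stdN_sub_stdN (a b : ℝ) :
    stdN b - stdN a = (√(2 * π))⁻¹ * ∫ x in a..b, exp (-x ^ 2 / 2) := by
  rw [stdN, stdN, ← mul_sub, intervalIntegral.integral_Iic_sub_Iic
    integrable_exp_neg_sq_div_two.integrableOn integrable_exp_neg_sq_div_two.integrableOn]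

lemma stdN_mono : Monotone stdN := fun a b hab => by
  have h := stdN_sub_stdN a b
  have : 0 ≤ ∫ x in a..b, exp (-x ^ 2 / 2) :=
    intervalIntegral.integral_nonneg hab fun x _ => (exp_pos _).le
  nlinarith [inv_nonneg.2 (sqrt_nonneg (2 * π))]

lemma hasDerivAt_stdN (x : ℝ) : HasDerivAt stdN (stdNd x) x := by
  have hcont : Continuous fun x : ℝ => exp (-x ^ 2 / 2) := by fun_prop
  have h := (intervalIntegral.integral_hasDerivAt_right
    integrable_exp_neg_sq_div_two.intervalIntegrable (hcont.stronglyMeasurableAtFilter _ _)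
    hcont.continuousAt (a := 0) (b := x)).const_mul (√(2 * π))⁻¹ |>.const_add (stdN 0)
  have hN : (fun z => stdN 0 + (√(2 * π))⁻¹ * ∫ x in (0 : ℝ)..z, exp (-x ^ 2 / 2)) = stdN :=
    funext fun z => by rw [← stdN_sub_stdN]; ring
  rwa [hN] at h

lemma continuous_stdN : Continuous stdN :=
  continuous_iff_continuousAt.2 fun x => (hasDerivAt_stdN x).continuousAt

lemma measurable_stdN : Measurable stdN := continuous_stdN.measurable

lemma stdN_sub_stdN_neg_le {a : ℝ} (ha : 0 ≤ a) : stdN a - stdN (-a) ≤ a := by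
  have hI : ∫ x in (-a)..a, exp (-x ^ 2 / 2) ≤ 2 * a := by
    have := intervalIntegral.integral_mono_on (a := -a) (b := a) (by linarith)
      integrable_exp_neg_sq_div_two.intervalIntegrable (intervalIntegrable_const (c := (1 : ℝ)))
      fun x _ => exp_le_one_iff.2 (by nlinarith [sq_nonneg x])
    simp only [intervalIntegral.integral_const, smul_eq_mul] at this
    linarith
  have hinv : (√(2 * π))⁻¹ ≤ 1 / 2 := by
    rw [one_div]; exact inv_anti₀ (by norm_num) two_le_sqrt_two_mul_pi
  rw [stdN_sub_stdN]
  calc _ ≤ 1 / 2 * (2 * a) := mul_le_mul hinv hI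
        (intervalIntegral.integral_nonneg (by linarith) fun x _ => (exp_pos _).le) (by norm_num)
    _ = a := by ring

lemma le_stdN_sub_stdN_neg {a : ℝ} (ha₀ : 0 ≤ a) (ha₁ : a ≤ 1) : a / 3 ≤ stdN a - stdN (-a) := by
  have hI : a ≤ ∫ x in (-a)..a, exp (-x ^ 2 / 2) := by
    have := intervalIntegral.integral_mono_on (a := -a) (b := a) (by linarith)
      (intervalIntegrable_const (c := 1 / 2))
      integrable_exp_neg_sq_div_two.intervalIntegrable fun x hx => by
        have : x ^ 2 ≤ 1 := by nlinarith [hx.1, hx.2]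
        linarith [add_one_le_exp (-x ^ 2 / 2)]
    simp only [intervalIntegral.integral_const, smul_eq_mul] at this
    linarith
  have hinv : (3 : ℝ)⁻¹ ≤ (√(2 * π))⁻¹ := inv_anti₀ (by positivity) sqrt_two_mul_pi_le_three
  rw [stdN_sub_stdN]
  calc a / 3 = 3⁻¹ * a := by ring
    _ ≤ _ := mul_le_mul hinv hI ha₀ (by positivity)

lemma stdN_sub_stdN_neg_le_min {a : ℝ} (ha : 0 ≤ a) : stdN a - stdN (-a) ≤ min a 1 :=
  le_min (stdN_sub_stdN_neg_le ha) (by linarith [stdN_le_one a, stdN_nonneg (-a)])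

/-- The Black–Scholes price of a call with unit strike, forward `exp c` and total volatility `s`. -/
noncomputable def bsCall (s c : ℝ) : ℝ := exp c * stdN (c / s + s / 2) - stdN (c / s - s / 2)

lemma bsCall_zero (s : ℝ) : bsCall s 0 = stdN (s / 2) - stdN (-(s / 2)) := by
  simp [bsCall]

lemma hasDerivAt_bsCall {s : ℝ} (hs : 0 < s) (c : ℝ) :
    HasDerivAt (bsCall s) (exp c * stdN (c / s + s / 2)) c := by
  have hd : HasDerivAt (fun x : ℝ => x / s) (1 / s) c := by
    simpa using (hasDerivAt_id c).div_const s
  have h₁ := (hasDerivAt_stdN _).comp c (hd.add_const (s / 2))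
  have h₂ := (hasDerivAt_stdN _).comp c (hd.sub_const (s / 2))
  have hφ : exp c * stdNd (c / s + s / 2) = stdNd (c / s - s / 2) := by
    rw [stdNd, stdNd, mul_left_comm, ← exp_add]
    congr 2
    field_simp
    ring
  have h := ((hasDerivAt_exp c).mul h₁).sub h₂
  rw [← hφ] at h
  exact h.congr_deriv (by simp only [Function.comp_apply]; ring)

lemma bsCall_le {s c p : ℝ} (hs : 0 ≤ s) (hcp : c ≤ p) (hp : 0 ≤ p) :
    bsCall s c ≤ bsCall s 0 + (exp p - 1) := by
  have hexp : exp c ≤ exp p := exp_le_exp.2 hcp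
  have hp1 : 1 ≤ exp p := one_le_exp hp
  rcases hs.eq_or_lt with rfl | hs
  · simp only [bsCall, div_zero, zero_div, add_zero, exp_zero, one_mul, sub_self,
      zero_add]
    nlinarith [stdN_nonneg 0, stdN_le_one 0]
  rcases le_or_gt c 0 with hc | hc
  · have hmono : Monotone (bsCall s) := monotone_of_deriv_nonneg
      (fun x => (hasDerivAt_bsCall hs x).differentiableAt) fun x => by
        rw [(hasDerivAt_bsCall hs x).deriv]
        exact mul_nonneg (exp_pos x).le (stdN_nonneg _)
    linarith [hmono hc]
  · have hderiv x := (hasDerivAt_bsCall hs x).sub (hasDerivAt_exp x)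
    have hanti : Antitone (bsCall s - exp) := antitone_of_deriv_nonpos
      (fun x => (hderiv x).differentiableAt) fun x => by
        rw [(hderiv x).deriv]
        nlinarith [exp_pos x, stdN_le_one (x / s + s / 2)]
    have := hanti hc.le
    simp only [Pi.sub_apply, exp_zero] at this
    linarith

lemma abs_bsCall_le (s c : ℝ) : |bsCall s c| ≤ exp c + 1 := by
  have := exp_pos c
  rw [bsCall, abs_le]
  constructor <;> nlinarith [stdN_nonneg (c / s + s / 2), stdN_le_one (c / s + s / 2),
    stdN_nonneg (c / s - s / 2), stdN_le_one (c / s - s / 2)]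

lemma ATSl_eq_div (α kbar σbar ηbar β δ : ℝ) {t : ℝ} (ht : 0 ≤ t) (z : ℝ) :
    ATSl α kbar σbar ηbar β δ t z =
      (ATSphi α kbar σbar ηbar β δ t * t - t * σbar ^ 2 * (ηbar * t ^ δ) * z) /
        (σbar * √(z * t)) := by
  rw [ATSl, sqrt_mul' z ht]
  rcases eq_or_ne σbar 0 with hσ | hσ
  · simp [hσ]
  rcases eq_or_ne √z 0 with hz | hz
  · simp [hz]
  rcases eq_or_ne √t 0 with hts | hts
  · simp [hts]
  field_simp
  rw [sq_sqrt (sqrt_ne_zero'.1 hz).le, sq_sqrt ht]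
  ring

lemma ATSCall_eq_integral_bsCall (α kbar σbar ηbar β δ : ℝ) (ν : Measure ℝ) {t : ℝ} (ht : 0 ≤ t) :
    ATSCall α kbar σbar ηbar β δ ν t = ∫ z, bsCall (σbar * √(z * t))
      (ATSphi α kbar σbar ηbar β δ t * t - t * σbar ^ 2 * (ηbar * t ^ δ) * z) ∂ν := by
  simp only [ATSCall, bsCall, ATSl_eq_div α kbar σbar ηbar β δ ht]

lemma exp_neg_one_le_half : exp (-1) ≤ 1 / 2 := by
  rw [exp_neg, one_div]
  exact inv_anti₀ (by norm_num) (by linarith [add_one_le_exp 1])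

lemma min_one_le_two_mul_one_sub_exp_neg {y : ℝ} (hy : 0 ≤ y) : min y 1 ≤ 2 * (1 - exp (-y)) := by
  rcases le_total y 1 with hy1 | hy1
  · have hconv := convexOn_exp.2 (mem_univ (-1)) (mem_univ 0) hy (sub_nonneg.2 hy1) (by ring)
    simp only [smul_eq_mul, mul_neg, mul_one, mul_zero, add_zero, exp_zero] at hconv
    nlinarith [min_le_left y 1, exp_neg_one_le_half]
  · linarith [min_le_right y 1, exp_le_exp.2 (neg_le_neg hy1), exp_neg_one_le_half]

lemma min_one_le_add_min_sq_div {w a : ℝ} (hw : 0 ≤ w) (ha : 0 < a) :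
    min w 1 ≤ a + min (w ^ 2) 1 / a := by
  have hmin : 0 ≤ min (w ^ 2) 1 / a := by positivity
  rcases le_total w a with hwa | hwa
  · linarith [min_le_left w 1]
  rcases le_total w 1 with hw1 | hw1
  · have : w ≤ w ^ 2 / a := by rw [le_div_iff₀ ha]; nlinarith
    rw [min_eq_left hw1, min_eq_left (by nlinarith)]
    linarith
  · rcases le_total a 1 with ha1 | ha1
    · rw [min_eq_right hw1, min_eq_right (by nlinarith)]
      have : 1 ≤ 1 / a := by rw [le_div_iff₀ ha]; linarith
      linarith
    · linarith [min_le_right w 1]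

/-- Below `c` use `√x ≤ √c`; above `c`, both `1` and `min (k² x) 1` are at most
`2 (1 - exp (-u x))` for the matching `u`. -/
lemma min_mul_sqrt_one_le {x k c A : ℝ} (hx : 0 ≤ x) (hk : 0 < k) (hc : 0 < c) (hA : 0 < A) :
    min (k * √x) 1 ≤ k * √c + 2 * (k * A) * (1 - exp (-(1 / c) * x)) +
      2 / (k * A) * (1 - exp (-k ^ 2 * x)) := by
  have hexp (u : ℝ) (hu : 0 ≤ u) : 0 ≤ 1 - exp (-u * x) :=
    sub_nonneg.2 (exp_le_one_iff.2 (by nlinarith))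
  have hkA : 0 < k * A := by positivity
  rcases le_total x c with hxc | hcx
  · have h₁ := hexp (1 / c) (by positivity)
    have h₂ := hexp (k ^ 2) (by positivity)
    have : k * √x ≤ k * √c := by gcongr
    linarith [min_le_left (k * √x) 1, mul_nonneg (by positivity : (0 : ℝ) ≤ 2 * (k * A)) h₁,
      mul_nonneg (by positivity : (0 : ℝ) ≤ 2 / (k * A)) h₂]
  · have hsq : (k * √x) ^ 2 = k ^ 2 * x := by rw [mul_pow, sq_sqrt hx]
    have h₁ := min_one_le_add_min_sq_div (mul_nonneg hk.le (sqrt_nonneg x)) hkA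
    have h₂ : 1 ≤ 2 * (1 - exp (-(1 / c) * x)) := by
      have := min_one_le_two_mul_one_sub_exp_neg (y := 1 / c * x) (by positivity)
      rwa [min_eq_right (by rw [one_div_mul_eq_div, le_div_iff₀ hc]; linarith), ← neg_mul] at this
    have h₃ := min_one_le_two_mul_one_sub_exp_neg (y := k ^ 2 * x) (by positivity)
    rw [hsq] at h₁
    rw [← neg_mul] at h₃
    have : min (k ^ 2 * x) 1 / (k * A) ≤ 2 / (k * A) * (1 - exp (-k ^ 2 * x)) := by
      rw [div_mul_eq_mul_div]; gcongr
    nlinarith [mul_nonneg hk.le (sqrt_nonneg c)]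

section LaplaceTransform

variable {ν : Measure ℝ}

lemma ae_nonneg_of_measure_Iio_eq_zero (hν : ν (Iio 0) = 0) : ∀ᵐ x ∂ν, 0 ≤ x := by
  rw [ae_iff]
  simp only [not_le]
  exact hν

lemma integrable_exp_neg_mul [IsFiniteMeasure ν] (hν : ν (Iio 0) = 0) {u : ℝ} (hu : 0 ≤ u) :
    Integrable (fun x => exp (-u * x)) ν := by
  refine (integrable_const 1).mono' (by fun_prop) ?_
  filter_upwards [ae_nonneg_of_measure_Iio_eq_zero hν] with x hx
  rw [norm_of_nonneg (exp_pos _).le]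
  exact exp_le_one_iff.2 (by nlinarith)

lemma integral_min_mul_sqrt_one_le [IsProbabilityMeasure ν] (hν : ν (Iio 0) = 0)
    (hmean : ∀ u ≥ 0, 1 - ∫ x, exp (-u * x) ∂ν ≤ u) {k c A : ℝ} (hk : 0 < k) (hc : 0 < c)
    (hA : 0 < A) :
    ∫ x, min (k * √x) 1 ∂ν ≤ k * (√c + 2 * A * (1 - ∫ x, exp (-(1 / c) * x) ∂ν) + 2 / A) := by
  have hi₁ := integrable_exp_neg_mul hν (u := 1 / c) (by positivity)
  have hi₂ := integrable_exp_neg_mul hν (u := k ^ 2) (by positivity)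
  have hf₁ : Integrable (fun x => 2 * (k * A) * (1 - exp (-(1 / c) * x))) ν :=
    ((integrable_const 1).sub hi₁).const_mul _
  have hf : Integrable (fun x => k * √c + 2 * (k * A) * (1 - exp (-(1 / c) * x))) ν :=
    (integrable_const _).add hf₁
  have hg : Integrable (fun x => 2 / (k * A) * (1 - exp (-k ^ 2 * x))) ν :=
    ((integrable_const 1).sub hi₂).const_mul _
  calc ∫ x, min (k * √x) 1 ∂ν
      ≤ ∫ x, (k * √c + 2 * (k * A) * (1 - exp (-(1 / c) * x)) +
          2 / (k * A) * (1 - exp (-k ^ 2 * x))) ∂ν := by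
        refine integral_mono_of_nonneg (.of_forall fun x => by positivity) (hf.add hg) ?_
        filter_upwards [ae_nonneg_of_measure_Iio_eq_zero hν] with x hx
        exact min_mul_sqrt_one_le hx hk hc hA
    _ = k * √c + 2 * (k * A) * (1 - ∫ x, exp (-(1 / c) * x) ∂ν) +
          2 / (k * A) * (1 - ∫ x, exp (-k ^ 2 * x) ∂ν) := by
        rw [integral_add hf hg, integral_add (integrable_const _) hf₁]
        simp only [integral_const_mul]
        rw [integral_sub (integrable_const 1) hi₁, integral_sub (integrable_const 1) hi₂]
        simp
    _ ≤ k * √c + 2 * (k * A) * (1 - ∫ x, exp (-(1 / c) * x) ∂ν) + 2 / (k * A) * k ^ 2 := by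
        gcongr
        exact hmean _ (by positivity)
    _ = k * (√c + 2 * A * (1 - ∫ x, exp (-(1 / c) * x) ∂ν) + 2 / A) := by
        field_simp

end LaplaceTransform

lemma one_add_rpow_le_one_add_rpow {y p : ℝ} (hy : 0 ≤ y) (hp₀ : 0 ≤ p) (hp₁ : p ≤ 1) :
    (1 + y) ^ p ≤ 1 + y ^ p := by
  have h := NNReal.coe_le_coe.2 (NNReal.rpow_add_le_add_rpow 1 y.toNNReal hp₀ hp₁)
  push_cast [NNReal.coe_rpow, coe_toNNReal y hy] at h
  simpa using h

lemma exp_sub_one_le_mul_exp (x : ℝ) : exp x - 1 ≤ x * exp x := by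
  have h := mul_le_mul_of_nonneg_left (add_one_le_exp (-x)) (exp_pos x).le
  rw [← exp_add, add_neg_cancel, exp_zero] at h
  linarith

lemma neg_log_ATSLaplace (α kbar β t u : ℝ) :
    -log (ATSLaplace α kbar β t u) = t / (kbar * t ^ β) * ((1 - α) / α) *
      ((1 + u * (kbar * t ^ β) / ((1 - α) * t)) ^ α - 1) := by
  rw [ATSLaplace, log_exp]
  ring

lemma one_sub_ATSLaplace_le (α kbar β t u : ℝ) :
    1 - ATSLaplace α kbar β t u ≤ -log (ATSLaplace α kbar β t u) := by
  have h : 0 < ATSLaplace α kbar β t u := exp_pos _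
  linarith [log_le_sub_one_of_pos h]

section ATSLaplaceExponent

variable {α kbar β t u : ℝ} (hα : α ∈ Ioo 0 1) (hk : 0 < kbar) (ht : 0 < t)
include hα hk ht

lemma ATSLaplace_prefactor_nonneg : 0 ≤ t / (kbar * t ^ β) * ((1 - α) / α) :=
  mul_nonneg (by positivity) (div_nonneg (sub_pos.2 hα.2).le hα.1.le)

variable (hu : 0 ≤ u)
include hu

lemma ATSLaplace_inner_nonneg : 0 ≤ u * (kbar * t ^ β) / ((1 - α) * t) :=
  div_nonneg (by positivity) (mul_nonneg (sub_pos.2 hα.2).le ht.le)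

lemma neg_log_ATSLaplace_nonneg : 0 ≤ -log (ATSLaplace α kbar β t u) := by
  rw [neg_log_ATSLaplace]
  exact mul_nonneg (ATSLaplace_prefactor_nonneg (β := β) hα hk ht) (sub_nonneg.2 (one_le_rpow
    (le_add_of_nonneg_right (ATSLaplace_inner_nonneg (β := β) hα hk ht hu)) hα.1.le))

lemma neg_log_ATSLaplace_le : -log (ATSLaplace α kbar β t u) ≤ u := by
  have hbernoulli := rpow_one_add_le_one_add_mul_self (s := u * (kbar * t ^ β) / ((1 - α) * t))
    (by linarith [ATSLaplace_inner_nonneg (β := β) hα hk ht hu]) hα.1.le hα.2.le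
  have := (sub_pos.2 hα.2).ne'
  have := (rpow_pos_of_pos ht β).ne'
  have := hα.1.ne'
  rw [neg_log_ATSLaplace]
  calc _ ≤ t / (kbar * t ^ β) * ((1 - α) / α) * (α * (u * (kbar * t ^ β) / ((1 - α) * t))) :=
        mul_le_mul_of_nonneg_left (by linarith) (ATSLaplace_prefactor_nonneg (β := β) hα hk ht)
    _ = u := by field_simp

lemma neg_log_ATSLaplace_le_rpow : -log (ATSLaplace α kbar β t u) ≤
    (1 - α) / α / kbar * (u * kbar / (1 - α)) ^ α * t ^ ((1 - β) * (1 - α)) := by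
  have h1α := sub_pos.2 hα.2
  have hy : u * (kbar * t ^ β) / ((1 - α) * t) = u * kbar / (1 - α) * t ^ (β - 1) := by
    rw [rpow_sub ht, rpow_one]
    field_simp
  have hsub := one_add_rpow_le_one_add_rpow (ATSLaplace_inner_nonneg (β := β) hα hk ht hu)
    hα.1.le hα.2.le
  rw [neg_log_ATSLaplace]
  calc _ ≤ t / (kbar * t ^ β) * ((1 - α) / α) * (u * (kbar * t ^ β) / ((1 - α) * t)) ^ α :=
        mul_le_mul_of_nonneg_left (by linarith) (ATSLaplace_prefactor_nonneg (β := β) hα hk ht)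
    _ = (1 - α) / α / kbar * (u * kbar / (1 - α)) ^ α * (t ^ (1 - β) * t ^ ((β - 1) * α)) := by
        rw [hy, mul_rpow (by positivity) (by positivity), ← rpow_mul ht.le, rpow_sub ht,
          rpow_one]
        field_simp
    _ = _ := by rw [← rpow_add ht]; ring_nf

end ATSLaplaceExponent

lemma tendsto_rpow_nhdsGT_zero {r : ℝ} (hr : 0 < r) :
    Tendsto (fun t : ℝ => t ^ r) (𝓝[>] 0) (𝓝 0) :=
  (tendsto_id.mono_left nhdsWithin_le_nhds).rpow_const_nhds_zero hr

lemma tendsto_neg_log_ATSLaplace {α kbar β u : ℝ} (hα : α ∈ Ioo 0 1) (hk : 0 < kbar)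
    (hβ : β < 1) (hu : 0 ≤ u) :
    Tendsto (fun t => -log (ATSLaplace α kbar β t u)) (𝓝[>] 0) (𝓝 0) := by
  have hr : 0 < (1 - β) * (1 - α) := mul_pos (by linarith) (by linarith [hα.2])
  have hlim := (tendsto_rpow_nhdsGT_zero hr).const_mul
    ((1 - α) / α / kbar * (u * kbar / (1 - α)) ^ α)
  rw [mul_zero] at hlim
  refine tendsto_of_tendsto_of_tendsto_of_le_of_le' tendsto_const_nhds hlim ?_ ?_ <;>
    filter_upwards [self_mem_nhdsWithin] with t ht
  · exact neg_log_ATSLaplace_nonneg hα hk ht hu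
  · exact neg_log_ATSLaplace_le_rpow hα hk ht hu

lemma ATSphi_mul_eq_neg_log (α kbar σbar ηbar β δ : ℝ) {t : ℝ} (ht : t ≠ 0) :
    ATSphi α kbar σbar ηbar β δ t * t =
      -log (ATSLaplace α kbar β t (t * σbar ^ 2 * (ηbar * t ^ δ))) := by
  rw [ATSphi, div_mul_cancel₀ _ ht]

lemma ATSphi_mul_nonneg {α kbar σbar ηbar β δ t : ℝ} (hα : α ∈ Ioo 0 1) (hk : 0 < kbar)
    (hη : 0 ≤ ηbar) (ht : 0 < t) : 0 ≤ ATSphi α kbar σbar ηbar β δ t * t := by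
  rw [ATSphi_mul_eq_neg_log _ _ _ _ _ _ ht.ne']
  exact neg_log_ATSLaplace_nonneg hα hk ht (by positivity)

/-- `0 ≤ φ_t t ≤ σ̄² η̄ t ^ (1 + δ)`, and `1 + δ > 1 / 2`. -/
lemma tendsto_exp_ATSphi_sub_one_div_sqrt {α kbar σbar ηbar β δ : ℝ} (hα : α ∈ Ioo 0 1)
    (hk : 0 < kbar) (hη : 0 ≤ ηbar) (hδ : -(1 / 2) < δ) :
    Tendsto (fun t => (exp (ATSphi α kbar σbar ηbar β δ t * t) - 1) / √t) (𝓝[>] 0) (𝓝 0) := by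
  set a := σbar ^ 2 * ηbar
  have hlim : Tendsto (fun t : ℝ => a * t ^ (1 / 2 + δ) * exp (a * t ^ (1 + δ)))
      (𝓝[>] 0) (𝓝 0) := by
    have h := ((tendsto_rpow_nhdsGT_zero (show 0 < 1 / 2 + δ by linarith)).const_mul a).mul
      ((tendsto_rpow_nhdsGT_zero (show 0 < 1 + δ by linarith)).const_mul a).rexp
    simpa using h
  refine tendsto_of_tendsto_of_tendsto_of_le_of_le' tendsto_const_nhds hlim ?_ ?_ <;>
    filter_upwards [self_mem_nhdsWithin] with t (ht : 0 < t)
  · have := ATSphi_mul_nonneg (σbar := σbar) (β := β) (δ := δ) hα hk hη ht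
    exact div_nonneg (by linarith [one_le_exp this]) (sqrt_nonneg t)
  · have hu₀ : t * σbar ^ 2 * (ηbar * t ^ δ) = a * t ^ (1 + δ) := by
      rw [rpow_add ht, rpow_one]; ring
    have hsqrt : a * t ^ (1 + δ) = √t * (a * t ^ (1 / 2 + δ)) := by
      rw [sqrt_eq_rpow, mul_left_comm, ← rpow_add ht]; ring_nf
    have hP := neg_log_ATSLaplace_le hα hk ht (β := β) (by positivity : 0 ≤ a * t ^ (1 + δ))
    rw [← hu₀, ← ATSphi_mul_eq_neg_log _ _ _ _ _ _ ht.ne', hu₀] at hP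
    rw [div_le_iff₀ (sqrt_pos.2 ht)]
    calc exp (ATSphi α kbar σbar ηbar β δ t * t) - 1 ≤ exp (a * t ^ (1 + δ)) - 1 := by gcongr
      _ ≤ a * t ^ (1 + δ) * exp (a * t ^ (1 + δ)) := exp_sub_one_le_mul_exp _
      _ = _ := by rw [hsqrt]; ring

lemma ATSCall_le {α kbar σbar ηbar β δ t c A : ℝ} {ν : Measure ℝ} [IsProbabilityMeasure ν]
    (hα : α ∈ Ioo 0 1) (hk : 0 < kbar) (hσ : 0 < σbar) (hη : 0 ≤ ηbar) (ht : 0 < t)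
    (hν : ν (Iio 0) = 0) (hlap : ∀ u ≥ 0, ∫ x, exp (-u * x) ∂ν = ATSLaplace α kbar β t u)
    (hc : 0 < c) (hA : 0 < A) :
    ATSCall α kbar σbar ηbar β δ ν t ≤
      σbar * √t / 2 * (√c + 2 * A * -log (ATSLaplace α kbar β t (1 / c)) + 2 / A) +
        (exp (ATSphi α kbar σbar ηbar β δ t * t) - 1) := by
  set P := ATSphi α kbar σbar ηbar β δ t * t
  set a := t * σbar ^ 2 * (ηbar * t ^ δ)
  have hP : 0 ≤ P := ATSphi_mul_nonneg hα hk hη ht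
  have hk' : 0 < σbar * √t / 2 := by have := sqrt_pos.2 ht; positivity
  have hnonneg := ae_nonneg_of_measure_Iio_eq_zero hν
  have hmean (u : ℝ) (hu : 0 ≤ u) : 1 - ∫ x, exp (-u * x) ∂ν ≤ u := by
    rw [hlap u hu]
    exact (one_sub_ATSLaplace_le _ _ _ _ _).trans (neg_log_ATSLaplace_le hα hk ht hu)
  have hcall (z : ℝ) (hz : 0 ≤ z) :
      bsCall (σbar * √(z * t)) (P - a * z) ≤ min (σbar * √t / 2 * √z) 1 + (exp P - 1) := by
    have hs : 0 ≤ σbar * √(z * t) := by positivity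
    have hbs := bsCall_le hs (c := P - a * z) (by nlinarith [show 0 ≤ a by positivity]) hP
    rw [bsCall_zero] at hbs
    have hmin := stdN_sub_stdN_neg_le_min (div_nonneg hs zero_le_two)
    have hs₂ : σbar * √(z * t) / 2 = σbar * √t / 2 * √z := by rw [sqrt_mul' z ht.le]; ring
    rw [hs₂] at hmin hbs
    linarith
  have hmeas_bs : Measurable fun z => bsCall (σbar * √(z * t)) (P - a * z) := by
    have := measurable_stdN
    unfold bsCall
    fun_prop
  have hint_bs : Integrable (fun z => bsCall (σbar * √(z * t)) (P - a * z)) ν := by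
    refine (integrable_const (exp P + 1)).mono' hmeas_bs.aestronglyMeasurable ?_
    filter_upwards [hnonneg] with z hz
    rw [norm_eq_abs]
    refine (abs_bsCall_le _ _).trans ?_
    gcongr
    nlinarith [show 0 ≤ a by positivity]
  have hint_min : Integrable (fun z => min (σbar * √t / 2 * √z) 1) ν := by
    refine (integrable_const 1).mono' (by fun_prop) (.of_forall fun z => ?_)
    rw [norm_of_nonneg (by positivity)]
    exact min_le_right _ _
  rw [ATSCall_eq_integral_bsCall _ _ _ _ _ _ _ ht.le]
  calc ∫ z, bsCall (σbar * √(z * t)) (P - a * z) ∂ν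
      ≤ ∫ z, (min (σbar * √t / 2 * √z) 1 + (exp P - 1)) ∂ν :=
        integral_mono_ae hint_bs (hint_min.add (integrable_const _)) (by
          filter_upwards [hnonneg] with z hz using hcall z hz)
    _ = ∫ z, min (σbar * √t / 2 * √z) 1 ∂ν + (exp P - 1) := by
        rw [integral_add hint_min (integrable_const _), integral_const]; simp
    _ ≤ σbar * √t / 2 * (√c + 2 * A * (1 - ∫ x, exp (-(1 / c) * x) ∂ν) + 2 / A) +
          (exp P - 1) := by
        gcongr
        exact integral_min_mul_sqrt_one_le hν hmean hk' hc hA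
    _ ≤ _ := by
        rw [hlap _ (by positivity)]
        gcongr
        exact one_sub_ATSLaplace_le _ _ _ _ _

lemma eventually_ATSCall_le_mul_sqrt {α kbar σbar ηbar β δ : ℝ} (hα : α ∈ Ioo 0 1)
    (hk : 0 < kbar) (hσ : 0 < σbar) (hη : 0 ≤ ηbar) (hβ : β < 1) (hδ : -(1 / 2) < δ)
    {μ : ℝ → Measure ℝ} (hprob : ∀ t > 0, IsProbabilityMeasure (μ t))
    (hsupp : ∀ t > 0, μ t (Iio 0) = 0)
    (hlap : ∀ t > 0, ∀ u ≥ 0, ∫ x, exp (-u * x) ∂(μ t) = ATSLaplace α kbar β t u)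
    {ε : ℝ} (hε : 0 < ε) :
    ∀ᶠ t in 𝓝[>] 0, ATSCall α kbar σbar ηbar β δ (μ t) t ≤ ε * √t := by
  -- `c` and `A` make the first and last terms of `ATSCall_le` contribute `ε √t / 4` each
  set c := (ε / (2 * σbar)) ^ 2
  set A := 4 * σbar / ε
  have hc : 0 < c := by positivity
  have hA : 0 < A := by positivity
  have htail := (tendsto_neg_log_ATSLaplace hα hk hβ (u := 1 / c)
    (by positivity)).eventually_le_const (show 0 < ε / (4 * σbar * A) by positivity)
  have hdrift := (tendsto_exp_ATSphi_sub_one_div_sqrt (σbar := σbar) (β := β) hα hk hη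
    hδ).eventually_le_const (show 0 < ε / 4 by positivity)
  filter_upwards [self_mem_nhdsWithin, htail, hdrift] with t (ht : 0 < t) htail hdrift
  have := hprob t ht
  have hsqrt := sqrt_pos.2 ht
  have hcall := ATSCall_le (δ := δ) hα hk hσ hη ht (hsupp t ht) (hlap t ht) hc hA
  rw [div_le_iff₀ hsqrt] at hdrift
  have hsqrt_c : √c = ε / (2 * σbar) := sqrt_sq (by positivity)
  have htail_term :
      σbar * √t / 2 * (2 * A * -log (ATSLaplace α kbar β t (1 / c))) ≤ ε / 4 * √t := by
    calc _ = σbar * A * √t * -log (ATSLaplace α kbar β t (1 / c)) := by ring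
      _ ≤ σbar * A * √t * (ε / (4 * σbar * A)) := by gcongr
      _ = ε / 4 * √t := by field_simp
  have hrest : σbar * √t / 2 * (√c + 2 / A) = ε / 2 * √t := by
    rw [hsqrt_c]; simp only [A]; field_simp; ring
  nlinarith

/-- If `σ̂_t ≥ ε`, then `N(σ̂_t √t / 2) - N(-σ̂_t √t / 2) ≥ ε √t / 6` for small `t`. -/
lemma tendsto_zero_of_eventually_stdN_sub_le {σhat : ℝ → ℝ} (hσpos : ∀ t > 0, 0 < σhat t)
    (h : ∀ ε > 0, ∀ᶠ t in 𝓝[>] 0,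
      stdN (σhat t * √t / 2) - stdN (-(σhat t * √t / 2)) ≤ ε * √t) :
    Tendsto σhat (𝓝[>] 0) (𝓝 0) := by
  refine tendsto_order.2 ⟨fun b hb => ?_, fun ε hε => ?_⟩
  · filter_upwards [self_mem_nhdsWithin] with t ht using hb.trans (hσpos t ht)
  have hsqrt_small : ∀ᶠ t in 𝓝[>] 0, √t ≤ 2 / ε :=
    ((continuous_sqrt.tendsto' 0 0 sqrt_zero).mono_left nhdsWithin_le_nhds).eventually_le_const
      (by positivity)
  filter_upwards [self_mem_nhdsWithin, h (ε / 8) (by positivity), hsqrt_small]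
    with t (ht : 0 < t) hC hsqrt_le
  by_contra! hge
  have hsqrt := sqrt_pos.2 ht
  have ha : ε * √t / 2 ≤ 1 := by
    calc ε * √t / 2 ≤ ε * (2 / ε) / 2 := by gcongr
      _ = 1 := by field_simp
  have hlow := le_stdN_sub_stdN_neg (by positivity) ha
  have hmono : ε * √t / 2 ≤ σhat t * √t / 2 := by gcongr
  nlinarith [stdN_mono hmono, stdN_mono (neg_le_neg hmono)]

/-- Case 1: if `0 < β < 1` and `−min(1/2,β) < δ ≤ 0`, or `β = δ = 0`,
then `σ̂_t → 0` as `t → 0⁺`. -/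
theorem stmt12 (α kbar σbar ηbar β δ : ℝ) (hα : α ∈ Set.Ioo (0:ℝ) 1)
    (hk : 0 < kbar) (hσ : 0 < σbar) (hη : 0 < ηbar)
    (hcase : (0 < β ∧ β < 1 ∧ -min (1/2) β < δ ∧ δ ≤ 0) ∨ (β = 0 ∧ δ = 0))
    (μ : ℝ → Measure ℝ)
    (hprob : ∀ t > 0, IsProbabilityMeasure (μ t))
    (hsupp : ∀ t > 0, μ t (Set.Iio 0) = 0)
    (hlap : ∀ t > 0, ∀ u ≥ 0,
      (∫ x, Real.exp (-u * x) ∂(μ t)) = ATSLaplace α kbar β t u)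
    (σhat : ℝ → ℝ) (hσpos : ∀ t > 0, 0 < σhat t)
    (hiv : ∀ t > 0,
      stdN (σhat t * Real.sqrt t / 2) - stdN (-(σhat t * Real.sqrt t / 2)) =
        ATSCall α kbar σbar ηbar β δ (μ t) t) :
    Tendsto σhat (𝓝[>] (0:ℝ)) (𝓝 0) := by
  have hβδ : β < 1 ∧ -(1 / 2) < δ := by
    rcases hcase with ⟨-, hβ, hδ, -⟩ | ⟨rfl, rfl⟩
    · exact ⟨hβ, by linarith [min_le_left (1 / 2 : ℝ) β]⟩
    · norm_num
  refine tendsto_zero_of_eventually_stdN_sub_le hσpos fun ε hε => ?_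
  filter_upwards [self_mem_nhdsWithin, eventually_ATSCall_le_mul_sqrt hα hk hσ hη.le hβδ.1 hβδ.2
    hprob hsupp hlap hε] with t ht hC
  rwa [hiv t ht]
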